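/- Let |ψ₁⟩ = (|0⟩|01⟩ + |1⟩|10⟩)/√2 on systems r, a1, a2, apply F ⊗ F to systems a1, a2 (with Kraus operators O_i ⊗ O_j), and project onto Π = (I - Z_{d1}Z_{d2})/2. Then the probability of the projection succeeding is Tr[Π ψ₂] = 1 - g, where ψ₂ = Σ_{i,j} (I ⊗ O_i ⊗ O_j)|ψ₁⟩⟨ψ₁|(I ⊗ O_i ⊗ O_j)†. -/

import Mathlib

open Matrix Kronecker

/-- The three Kraus operators of the damping-dephasing channel. -/
noncomputable def Ops (p g : ℝ) : Fin 3 → Matrix (Fin 2) (Fin 2) ℂ :=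
  ![!![(Real.sqrt (1 - p) : ℂ), 0;
      0, (Real.sqrt (1 - p) : ℂ) * (Real.sqrt (1 - g) : ℂ)],
    !![0, (Real.sqrt g : ℂ); 0, 0],
    !![(Real.sqrt p : ℂ), 0;
      0, -((Real.sqrt p : ℂ) * (Real.sqrt (1 - g) : ℂ))]]

/-- Pauli `Z` matrix. -/
def PauliZ : Matrix (Fin 2) (Fin 2) ℂ := !![1, 0; 0, -1]

/-- The state vector `|ψ₁⟩ = (|0⟩|01⟩ + |1⟩|10⟩)/√2` on `r ⊗ a1 ⊗ a2`. -/
noncomputable def psi1 : Fin 2 × Fin 2 × Fin 2 → ℂ := fun x =>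
  if x = ((0 : Fin 2), (0 : Fin 2), (1 : Fin 2)) then ((Real.sqrt 2 : ℝ) : ℂ)⁻¹
  else if x = ((1 : Fin 2), (1 : Fin 2), (0 : Fin 2)) then ((Real.sqrt 2 : ℝ) : ℂ)⁻¹
  else 0

/-- The density operator `|ψ₁⟩⟨ψ₁|`. -/
noncomputable def psi1Op : Matrix (Fin 2 × Fin 2 × Fin 2) (Fin 2 × Fin 2 × Fin 2) ℂ :=
  Matrix.of fun a b => psi1 a * (starRingEnd ℂ) (psi1 b)

/-- Kraus operator `I ⊗ O_i ⊗ O_j` of `id ⊗ F ⊗ F`. -/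
noncomputable def Kop (p g : ℝ) (i j : Fin 3) :
    Matrix (Fin 2 × Fin 2 × Fin 2) (Fin 2 × Fin 2 × Fin 2) ℂ :=
  (1 : Matrix (Fin 2) (Fin 2) ℂ) ⊗ₖ (Ops p g i ⊗ₖ Ops p g j)

/-- The state after sending `a1, a2` through `F ⊗ F`. -/
noncomputable def psi2 (p g : ℝ) :
    Matrix (Fin 2 × Fin 2 × Fin 2) (Fin 2 × Fin 2 × Fin 2) ℂ :=
  ∑ i : Fin 3, ∑ j : Fin 3, Kop p g i j * psi1Op * (Kop p g i j)ᴴ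

/-- The parity projector `Π = (I - Z_{d1} Z_{d2})/2` on `d1, d2`. -/
noncomputable def parityProj :
    Matrix (Fin 2 × Fin 2 × Fin 2) (Fin 2 × Fin 2 × Fin 2) ℂ :=
  (2 : ℂ)⁻¹ • ((1 : Matrix (Fin 2 × Fin 2 × Fin 2) (Fin 2 × Fin 2 × Fin 2) ℂ) -
    (1 : Matrix (Fin 2) (Fin 2) ℂ) ⊗ₖ (PauliZ ⊗ₖ PauliZ))

/-
Pass to the Heisenberg picture: `Tr[Π ∑ K ρ Kᴴ] = Tr[(∑ Kᴴ Π K) ρ]`, and for product Kraus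
operators `I ⊗ Oᵢ ⊗ Oⱼ` the adjoint channel acts factorwise on `I ⊗ X ⊗ Y`. The adjoint of the
single-qubit channel sends `diag(a, b)` to `diag(a, g a + (1 - g) b)`, so it fixes `I` and sends
`Z` to `diag(1, 2g - 1)`. In `ψ₁` the two data qubits always have opposite values, so
`⟨diag(1, c) ⊗ diag(1, c)⟩ = c`, and the probability is `(1 - (2g - 1)) / 2 = 1 - g`.
-/
section KrausAdjoint

variable {ι R n : Type*} [Fintype ι] [Fintype n] [CommSemiring R] [StarRing R]

def krausAdjoint (K : ι → Matrix n n R) (X : Matrix n n R) : Matrix n n R :=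
  ∑ i, (K i)ᴴ * X * K i

theorem trace_mul_sum_conj (K : ι → Matrix n n R) (X ρ : Matrix n n R) :
    (X * ∑ i, K i * ρ * (K i)ᴴ).trace = (krausAdjoint K X * ρ).trace := by
  simp only [krausAdjoint, Matrix.mul_sum, Matrix.sum_mul, trace_sum]
  refine Finset.sum_congr rfl fun i _ => ?_
  simp only [← Matrix.mul_assoc]
  rw [trace_mul_comm]
  simp only [Matrix.mul_assoc]

theorem krausAdjoint_one_kronecker_kronecker {κ m n' : Type*} [Fintype κ] [Fintype m]
    [DecidableEq m] [Fintype n'] (A : ι → Matrix n n R) (B : κ → Matrix n' n' R)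
    (X : Matrix n n R) (Y : Matrix n' n' R) :
    krausAdjoint (fun k : ι × κ => (1 : Matrix m m R) ⊗ₖ (A k.1 ⊗ₖ B k.2)) (1 ⊗ₖ (X ⊗ₖ Y)) =
      1 ⊗ₖ (krausAdjoint A X ⊗ₖ krausAdjoint B Y) := by
  have hterm : ∀ k : ι × κ, ((1 : Matrix m m R) ⊗ₖ (A k.1 ⊗ₖ B k.2))ᴴ * (1 ⊗ₖ (X ⊗ₖ Y)) *
      (1 ⊗ₖ (A k.1 ⊗ₖ B k.2)) = 1 ⊗ₖ (((A k.1)ᴴ * X * A k.1) ⊗ₖ ((B k.2)ᴴ * Y * B k.2)) := by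
    intro k
    simp only [conjTranspose_kronecker, conjTranspose_one, ← mul_kronecker_mul, Matrix.one_mul]
  simp only [krausAdjoint, hterm, Fintype.sum_prod_type]
  ext a b
  simp only [Matrix.sum_apply, kroneckerMap_apply, Finset.mul_sum, Finset.sum_mul]
  exact Finset.sum_comm

end KrausAdjoint

theorem complex_ofReal_sqrt_mul_self {x : ℝ} (hx : 0 ≤ x) :
    ((√x : ℝ) : ℂ) * (√x : ℝ) = x := by
  rw [← Complex.ofReal_mul, Real.mul_self_sqrt hx]

theorem krausAdjoint_Ops_diagonal {p g : ℝ} (hp0 : 0 ≤ p) (hp1 : p ≤ 1) (hg0 : 0 ≤ g)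
    (hg1 : g ≤ 1) (a b : ℂ) :
    krausAdjoint (Ops p g) (diagonal ![a, b]) = diagonal ![a, g * a + (1 - g) * b] := by
  have hp := complex_ofReal_sqrt_mul_self hp0
  have hq := complex_ofReal_sqrt_mul_self (sub_nonneg.2 hp1)
  have hg := complex_ofReal_sqrt_mul_self hg0
  have hh := complex_ofReal_sqrt_mul_self (sub_nonneg.2 hg1)
  push_cast at hq hh
  ext i j
  fin_cases i <;> fin_cases j <;>
    simp [krausAdjoint, Ops, Fin.sum_univ_three, mul_apply, Fin.sum_univ_two]
  · linear_combination a * hq + a * hp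
  · linear_combination ((√(1 - g) : ℝ) : ℂ) ^ 2 * b * (hq + hp) + a * hg + b * hh

theorem trace_one_kronecker_diagonal_mul_psi1Op (x y : Fin 2 → ℂ) :
    ((1 ⊗ₖ (diagonal x ⊗ₖ diagonal y)) * psi1Op).trace = (x 0 * y 1 + x 1 * y 0) / 2 := by
  have h2 : ((√2 : ℝ) : ℂ)⁻¹ * ((√2 : ℝ) : ℂ)⁻¹ = 2⁻¹ := by
    rw [← mul_inv, complex_ofReal_sqrt_mul_self zero_le_two, Complex.ofReal_ofNat]
  simp only [trace, diagonal, psi1Op, psi1, ite_mul, zero_mul, diag_apply, mul_apply,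
    kroneckerMap_apply, one_apply, of_apply, mul_ite, mul_zero, one_mul, Fintype.sum_prod_type,
    Prod.mk.injEq, Fin.sum_univ_two, zero_ne_one, and_false, if_true, if_false, and_true,
    one_ne_zero, zero_add, add_zero, map_inv₀, Complex.conj_ofReal]
  rw [h2]
  ring

theorem parityProj_eq_smul_sub :
    parityProj = (2 : ℂ)⁻¹ • (1 ⊗ₖ (diagonal ![1, 1] ⊗ₖ diagonal ![1, 1]) -
      1 ⊗ₖ (diagonal ![1, -1] ⊗ₖ diagonal ![1, -1])) := by
  have hone : diagonal ![(1 : ℂ), 1] = 1 := by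
    rw [← diagonal_one]; congr 1; ext i; fin_cases i <;> rfl
  have hZ : PauliZ = diagonal ![1, -1] := by
    ext i j; fin_cases i <;> fin_cases j <;> rfl
  rw [parityProj, hone, hZ, one_kronecker_one, one_kronecker_one]

theorem parity_projection_probability (p g : ℝ)
    (hp : p ∈ Set.Icc (0 : ℝ) (1/2)) (hg : g ∈ Set.Icc (0 : ℝ) 1) :
    (parityProj * psi2 p g).trace = ((1 - g : ℝ) : ℂ) := by
  have hF := krausAdjoint_Ops_diagonal hp.1 (hp.2.trans (by norm_num)) hg.1 hg.2
  have hψ₂ : psi2 p g = ∑ k : Fin 3 × Fin 3,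
      (1 ⊗ₖ (Ops p g k.1 ⊗ₖ Ops p g k.2)) * psi1Op * (1 ⊗ₖ (Ops p g k.1 ⊗ₖ Ops p g k.2))ᴴ :=
    (Fintype.sum_prod_type' _).symm
  rw [parityProj_eq_smul_sub, Matrix.smul_mul, Matrix.sub_mul, trace_smul, trace_sub, hψ₂,
    trace_mul_sum_conj, trace_mul_sum_conj, krausAdjoint_one_kronecker_kronecker,
    krausAdjoint_one_kronecker_kronecker, hF, hF, trace_one_kronecker_diagonal_mul_psi1Op,
    trace_one_kronecker_diagonal_mul_psi1Op]
  simp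
  ring
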